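/- arXiv:math/0406187 — 6 statements merged into one kernel-verified Lean document; each statement's English description precedes it below -/
import Mathlib

section
/- Let (e_σ, α_σ)_{σ∈G} be an idempotent partial action of a finite group G on a commutative ring A. Then the partial skew group ring A ⋆_α G = ⊕_{σ∈G} A e_σ u_σ, with multiplication (a_σ u_σ)(b_τ u_τ) = α_σ(α_{σ⁻¹}(a_σ) b_τ) u_{στ}, is an associative ring with unit e_1 u_1. -/
/-- Multiplication of the partial skew group ring A ⋆_α G = ⊕ Ae_σ u_σ :
(a_σ u_σ)(b_τ u_τ) = α_σ(α_{σ⁻¹}(a_σ) b_τ) u_{στ}. -/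
def skewMul {G A : Type*} [Group G] [Fintype G] [Ring A] (α : G → A → A)
    (f g : G → A) : G → A :=
  fun ρ => ∑ σ : G, α σ (α σ⁻¹ (f σ) * g (σ⁻¹ * ρ))

/-- The unit e_1 u_1 (with e_1 = 1). -/
def skewOne {G A : Type*} [Group G] [DecidableEq G] [Ring A] : G → A :=
  fun σ => if σ = 1 then 1 else 0

/- STATEMENT 4: A ⋆_α G is an associative ring with unit e_1 u_1. -/
theorem stmt_4 (G A : Type*) [Group G] [Fintype G] [DecidableEq G] [CommRing A]
    (e : G → A) (α : G → A → A)
    (hcen : ∀ σ a, e σ * a = a * e σ)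
    (hidem : ∀ σ, e σ * e σ = e σ)
    (hext : ∀ σ a, α σ a = α σ (a * e σ⁻¹))
    (hmem : ∀ σ a, α σ a * e σ = α σ a)
    (hadd : ∀ σ a b, α σ (a + b) = α σ a + α σ b)
    (hmul : ∀ σ a b, α σ (a * b) = α σ a * α σ b)
    (hone : e 1 = 1)
    (hα1 : ∀ a, α 1 a = a)
    (hcompat : ∀ σ τ a,
      α σ (α τ (a * e τ⁻¹) * e σ⁻¹) = α (σ * τ) (a * e (τ⁻¹ * σ⁻¹)) * e σ) :
    (∀ f g h : G → A,
      (∀ σ, f σ * e σ = f σ) → (∀ σ, g σ * e σ = g σ) → (∀ σ, h σ * e σ = h σ) →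
      skewMul α (skewMul α f g) h = skewMul α f (skewMul α g h)) ∧
    (∀ f : G → A, (∀ σ, f σ * e σ = f σ) →
      skewMul α (skewOne (G := G) (A := A)) f = f ∧
      skewMul α f (skewOne (G := G) (A := A)) = f) := by
  -- α σ 0 = 0
  have hzero : ∀ σ, α σ 0 = 0 := by
    intro σ
    have h := hadd σ 0 0
    rw [add_zero] at h
    exact (left_eq_add.mp h)
  -- α σ commutes with finite sums
  have hsum : ∀ (σ : G) (s : Finset G) (F : G → A),
      α σ (∑ i ∈ s, F i) = ∑ i ∈ s, α σ (F i) := by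
    intro σ s F
    induction s using Finset.induction with
    | empty => simpa using hzero σ
    | insert _ _ hnot ih =>
        rw [Finset.sum_insert hnot, Finset.sum_insert hnot, hadd, ih]
  -- inverse relation: α σ (α σ⁻¹ x) = x * e σ
  have ainv : ∀ (σ : G) (x : A), α σ (α σ⁻¹ x) = x * e σ := by
    intro σ x
    have h := hcompat σ σ⁻¹ x
    simp only [inv_inv, mul_inv_cancel, hone, mul_one, hα1] at h
    have he : α σ⁻¹ x = α σ⁻¹ (x * e σ) := by
      have h2 := hext σ⁻¹ x
      rwa [inv_inv] at h2
    rw [← he, hmem σ⁻¹ x] at h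
    exact h
  -- L1 : α σ (α σ⁻¹ x * y) = x * e σ * α σ y
  have L1 : ∀ (σ : G) (x y : A), α σ (α σ⁻¹ x * y) = x * e σ * α σ y := by
    intro σ x y
    rw [hmul, ainv]
  -- L2 : α σ (α τ c) = α (σ*τ) (c * e (τ⁻¹ * σ⁻¹)) * e σ
  have L2 : ∀ (σ τ : G) (c : A),
      α σ (α τ c) = α (σ * τ) (c * e (τ⁻¹ * σ⁻¹)) * e σ := by
    intro σ τ c
    rw [hext τ c, hext σ (α τ (c * e τ⁻¹)), hcompat]
  -- key termwise identity
  have key : ∀ (σ τ : G) (a b c : A), b * e (σ⁻¹ * τ) = b →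
      α τ (α τ⁻¹ (α σ (a * b)) * c)
        = α σ (a * α (σ⁻¹ * τ) (α (σ⁻¹ * τ)⁻¹ b * c)) := by
    intro σ τ a b c hb
    rw [L1 τ (α σ (a * b)) c, L1 (σ⁻¹ * τ) b c, hb]
    rw [show a * (b * α (σ⁻¹ * τ) c) = (a * b) * α (σ⁻¹ * τ) c by ring]
    rw [hmul σ (a * b) (α (σ⁻¹ * τ) c), L2 σ (σ⁻¹ * τ) c]
    simp only [mul_inv_rev, inv_inv, mul_inv_cancel_left, mul_inv_cancel_right]
    rw [← hext τ c]
    calc α σ (a * b) * e τ * α τ c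
        = α σ (a * b) * (α τ c * e τ) := by ring
      _ = α σ (a * b) * α τ c := by rw [hmem]
      _ = (α σ (a * b) * e σ) * α τ c := by rw [hmem]
      _ = α σ (a * b) * (α τ c * e σ) := by ring
  refine ⟨?_, ?_⟩
  · intro f g h hf hg hh
    funext ρ
    simp only [skewMul]
    simp only [hsum, Finset.sum_mul, Finset.mul_sum]
    rw [Finset.sum_comm]
    refine Finset.sum_congr rfl fun σ _ => ?_
    refine Fintype.sum_equiv (Equiv.mulLeft σ⁻¹) _ _ fun τ => ?_
    have := key σ τ (α σ⁻¹ (f σ)) (g (σ⁻¹ * τ)) (h (τ⁻¹ * ρ)) (hg (σ⁻¹ * τ))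
    simp only [Equiv.coe_mulLeft, mul_inv_rev, inv_inv]
    rw [show τ⁻¹ * σ * (σ⁻¹ * ρ) = τ⁻¹ * ρ by group]
    simp only [mul_inv_rev, inv_inv] at this
    exact this
  · intro f hf
    constructor
    · funext ρ
      simp only [skewMul, skewOne]
      rw [Fintype.sum_eq_single 1]
      · simp [hα1]
      · intro σ hσ
        rw [if_neg hσ, hzero, zero_mul, hzero]
    · funext ρ
      simp only [skewMul, skewOne]
      rw [Fintype.sum_eq_single ρ]
      · rw [if_pos (inv_mul_cancel ρ), mul_one, ainv, hf]
      · intro σ hσ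
        rw [if_neg (fun hc => hσ (inv_mul_eq_one.mp hc)), mul_zero, hzero]
end

section
/- Let (e_σ, α_σ)_{σ∈G} be an idempotent partial action of a finite group G on a ring A. The map t : A → A defined by t(a) = Σ_{σ∈G} α_σ(a e_{σ⁻¹}) (the partial trace) takes values in the invariant subring A^G = { b : α_σ(b e_{σ⁻¹}) = b e_σ for all σ }. -/
/- STATEMENT 7: the partial trace t(a) = Σ_σ α_σ(a e_{σ⁻¹}) takes values in the
invariant subring A^G. -/
theorem stmt_7 (G A : Type*) [Group G] [Fintype G] [CommRing A]
    (e : G → A) (α : G → A → A)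
    (hcen : ∀ σ a, e σ * a = a * e σ)
    (hidem : ∀ σ, e σ * e σ = e σ)
    (hext : ∀ σ a, α σ a = α σ (a * e σ⁻¹))
    (hmem : ∀ σ a, α σ a * e σ = α σ a)
    (hadd : ∀ σ a b, α σ (a + b) = α σ a + α σ b)
    (hmul : ∀ σ a b, α σ (a * b) = α σ a * α σ b)
    (hone : e 1 = 1)
    (hα1 : ∀ a, α 1 a = a)
    (hcompat : ∀ σ τ a,
      α σ (α τ (a * e τ⁻¹) * e σ⁻¹) = α (σ * τ) (a * e (τ⁻¹ * σ⁻¹)) * e σ) :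
    ∀ a : A, ∀ τ : G,
      α τ ((∑ σ : G, α σ (a * e σ⁻¹)) * e τ⁻¹) =
        (∑ σ : G, α σ (a * e σ⁻¹)) * e τ := by
  intro a τ
  have hsum : ∀ ρ (f : G → A), α ρ (∑ σ : G, f σ) = ∑ σ : G, α ρ (f σ) := by
    intro ρ f
    exact map_sum (AddMonoidHom.mk' (α ρ) (hadd ρ)) f Finset.univ
  rw [Finset.sum_mul, hsum]
  have hterm : ∀ σ : G, α τ (α σ (a * e σ⁻¹) * e τ⁻¹)
      = α (τ * σ) (a * e (τ * σ)⁻¹) * e τ := by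
    intro σ
    rw [mul_inv_rev]
    exact hcompat τ σ a
  simp only [hterm]
  rw [Finset.sum_mul]
  exact Fintype.sum_equiv (Equiv.mulLeft τ) _ _ (fun σ => rfl)
end

section
/- Let (e_σ, α_σ)_{σ∈G} be an idempotent partial action of a finite group G on a ring A, and C = ⊕_{σ∈G} A v_σ the associated A-coring with comultiplication Δ(a v_σ) = Σ_τ a v_τ ⊗_A v_{τ⁻¹σ} and counit ε(Σ_σ a_σ v_σ) = a_1. Then x = Σ_{σ∈G} v_σ is a grouplike element: Δ(x) = x ⊗_A x and ε(x) = 1. -/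
/-- Elements of the coring C = ⊕_σ Ae_σ v_σ are functions c : G → A with
c σ ∈ Ae_σ.  In the normal form of C ⊗_A C (with basis v_σ ⊗ v_τ, coefficients
indexed by G × G, using v_σ b = α_σ(b e_{σ⁻¹}) v_σ to move coefficients to the
left), the comultiplication Δ(c) = Σ_{σ,τ} c_σ v_τ ⊗_A v_{τ⁻¹σ} has
(τ,ρ)-coefficient c(τρ) e_τ. -/
def coringDelta {G A : Type*} [Group G] [Ring A] (e : G → A) (c : G → A) :
    G × G → A :=
  fun p => c (p.1 * p.2) * e p.1

/-- The (τ,ρ)-coefficient of the elementary tensor c ⊗_A d in C ⊗_A C is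
c τ * α_τ(d ρ e_{τ⁻¹}). -/
def cten {G A : Type*} [Group G] [Ring A] (e : G → A) (α : G → A → A)
    (c d : G → A) : G × G → A :=
  fun p => c p.1 * α p.1 (d p.2 * e p.1⁻¹)

/- STATEMENT 9: x = Σ_σ v_σ (i.e. the coefficient function σ ↦ e_σ) is a
grouplike element: Δ(x) = x ⊗_A x and ε(x) = x(1) = 1. -/
theorem stmt_9 (G A : Type*) [Group G] [Ring A]
    (e : G → A) (α : G → A → A)
    (hcen : ∀ σ a, e σ * a = a * e σ)
    (hidem : ∀ σ, e σ * e σ = e σ)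
    (hext : ∀ σ a, α σ a = α σ (a * e σ⁻¹))
    (hmem : ∀ σ a, α σ a * e σ = α σ a)
    (hadd : ∀ σ a b, α σ (a + b) = α σ a + α σ b)
    (hmul : ∀ σ a b, α σ (a * b) = α σ a * α σ b)
    (hone : e 1 = 1)
    (hα1 : ∀ a, α 1 a = a)
    (hcompat : ∀ σ τ a,
      α σ (α τ (a * e τ⁻¹) * e σ⁻¹) = α (σ * τ) (a * e (τ⁻¹ * σ⁻¹)) * e σ) :
    coringDelta e (fun σ => e σ) = cten e α (fun σ => e σ) (fun σ => e σ) ∧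
    e (1 : G) = 1 := by
  -- key lemma: α τ 1 = e τ
  have hα1e : ∀ τ : G, α τ 1 = e τ := by
    intro τ
    have I1 : α τ (α τ⁻¹ (1 * e τ⁻¹⁻¹) * e τ⁻¹) = e τ := by
      have h := hcompat τ τ⁻¹ 1
      rw [mul_inv_cancel] at h
      rw [h, inv_inv, mul_inv_cancel, hone, one_mul, hα1, one_mul]
    calc α τ 1 = α τ 1 * e τ := (hmem τ 1).symm
      _ = α τ 1 * α τ (α τ⁻¹ (1 * e τ⁻¹⁻¹) * e τ⁻¹) := by rw [I1]
      _ = α τ (1 * (α τ⁻¹ (1 * e τ⁻¹⁻¹) * e τ⁻¹)) := (hmul τ _ _).symm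
      _ = e τ := by rw [one_mul, I1]
  constructor
  · funext p
    obtain ⟨τ, ρ⟩ := p
    show e (τ * ρ) * e τ = e τ * α τ (e ρ * e τ⁻¹)
    have key : α τ (e ρ * e τ⁻¹) = e (τ * ρ) * e τ := by
      have hρ : e ρ = α ρ (1 * e ρ⁻¹) := by rw [← hext ρ 1, hα1e ρ]
      calc α τ (e ρ * e τ⁻¹) = α τ (α ρ (1 * e ρ⁻¹) * e τ⁻¹) := by rw [← hρ]
        _ = α (τ * ρ) (1 * e (ρ⁻¹ * τ⁻¹)) * e τ := hcompat τ ρ 1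
        _ = α (τ * ρ) (1 * e (τ * ρ)⁻¹) * e τ := by rw [mul_inv_rev]
        _ = e (τ * ρ) * e τ := by rw [← hext (τ * ρ) 1, hα1e]
    rw [key, ← mul_assoc, hcen τ (e (τ * ρ)), mul_assoc, hidem]
  · exact hone
end

section
/- Let (e_σ, α_σ)_{σ∈G} be an idempotent partial action of a finite group G on a ring A. Then the left dual ring *C = ⊕_{σ∈G} u_σ A e_σ with multiplication (u_τ b)(u_σ a) = u_{στ} α_σ(b e_{σ⁻¹}) a (for b ∈ Ae_τ, a ∈ Ae_σ) is an associative unital ring with unit u_1. -/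
/-- Multiplication of the left dual ring *C = ⊕_σ u_σ Ae_σ :
(u_τ b)(u_σ a) = u_{στ} α_σ(b e_{σ⁻¹}) a.  An element Σ_τ u_τ f(τ) is a function
f : G → A with f τ ∈ Ae_τ; the product has ρ-component
Σ_{σ, with τ = σ⁻¹ρ} α_σ(f(σ⁻¹ρ) e_{σ⁻¹}) g(σ). -/
def dualMul {G A : Type*} [Group G] [Fintype G] [Ring A] (e : G → A)
    (α : G → A → A) (f g : G → A) : G → A :=
  fun ρ => ∑ σ : G, α σ (f (σ⁻¹ * ρ) * e σ⁻¹) * g σ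

/-- The unit u_1 (= u_1 e_1 with e_1 = 1). -/
def dualOne {G A : Type*} [Group G] [DecidableEq G] [Ring A] : G → A :=
  fun σ => if σ = 1 then 1 else 0

/- STATEMENT 12: *C is an associative unital ring with unit u_1. -/
theorem stmt_12 (G A : Type*) [Group G] [Fintype G] [DecidableEq G] [Ring A]
    (e : G → A) (α : G → A → A)
    (hcen : ∀ σ a, e σ * a = a * e σ)
    (hidem : ∀ σ, e σ * e σ = e σ)
    (hext : ∀ σ a, α σ a = α σ (a * e σ⁻¹))
    (hmem : ∀ σ a, α σ a * e σ = α σ a)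
    (hadd : ∀ σ a b, α σ (a + b) = α σ a + α σ b)
    (hmul : ∀ σ a b, α σ (a * b) = α σ a * α σ b)
    (hone : e 1 = 1)
    (hα1 : ∀ a, α 1 a = a)
    (hcompat : ∀ σ τ a,
      α σ (α τ (a * e τ⁻¹) * e σ⁻¹) = α (σ * τ) (a * e (τ⁻¹ * σ⁻¹)) * e σ) :
    (∀ f g h : G → A,
      (∀ σ, f σ * e σ = f σ) → (∀ σ, g σ * e σ = g σ) → (∀ σ, h σ * e σ = h σ) →
      dualMul e α (dualMul e α f g) h = dualMul e α f (dualMul e α g h)) ∧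
    (∀ f : G → A, (∀ σ, f σ * e σ = f σ) →
      dualMul e α (dualOne (G := G) (A := A)) f = f ∧
      dualMul e α f (dualOne (G := G) (A := A)) = f) := by
  -- α σ 0 = 0
  have hzero : ∀ σ, α σ 0 = (0 : A) := by
    intro σ
    have h := hadd σ 0 0
    rw [add_zero] at h
    exact (left_eq_add.mp h)
  -- α σ 1 * e σ = e σ
  have hαone : ∀ σ : G, α σ 1 * e σ = e σ := by
    intro σ
    have h := hcompat σ σ⁻¹ 1
    simp only [inv_inv, mul_inv_cancel, inv_mul_cancel, hone, hα1, mul_one, one_mul] at h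
    -- h : α σ (α σ⁻¹ (e σ) * e σ⁻¹) = e σ
    rw [hmem σ⁻¹] at h
    -- h : α σ (α σ⁻¹ (e σ)) = e σ
    calc α σ 1 * e σ = α σ 1 * α σ (α σ⁻¹ (e σ)) := by rw [h]
      _ = α σ (1 * α σ⁻¹ (e σ)) := (hmul σ 1 _).symm
      _ = e σ := by rw [one_mul, h]
  -- key associativity identity
  have key : ∀ (σ τ : G) (a b : A),
      α σ (α τ (a * e τ⁻¹) * (b * e σ⁻¹))
        = α (σ * τ) (a * e (τ⁻¹ * σ⁻¹)) * α σ (b * e σ⁻¹) := by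
    intro σ τ a b
    have hb : e σ⁻¹ * (b * e σ⁻¹) = b * e σ⁻¹ := by
      rw [hcen σ⁻¹ (b * e σ⁻¹), mul_assoc, hidem]
    have h1 : α τ (a * e τ⁻¹) * (b * e σ⁻¹)
        = (α τ (a * e τ⁻¹) * e σ⁻¹) * (b * e σ⁻¹) := by
      rw [mul_assoc, hb]
    rw [h1, hmul, hcompat, mul_assoc, hcen, hmem]
  constructor
  · -- associativity
    intro f g h hf hg hh
    funext ρ
    simp only [dualMul]
    have hsum : ∀ (σ : G) (t : G → A), α σ (∑ x : G, t x) = ∑ x : G, α σ (t x) := by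
      intro σ t
      exact map_sum (AddMonoidHom.mk' (α σ) (hadd σ)) t Finset.univ
    calc ∑ σ : G, α σ ((∑ τ : G, α τ (f (τ⁻¹ * (σ⁻¹ * ρ)) * e τ⁻¹) * g τ) * e σ⁻¹) * h σ
        = ∑ σ : G, ∑ τ : G,
            α (σ * τ) (f (τ⁻¹ * (σ⁻¹ * ρ)) * e (τ⁻¹ * σ⁻¹)) * α σ (g τ * e σ⁻¹) * h σ := by
          refine Finset.sum_congr rfl fun σ _ => ?_
          rw [Finset.sum_mul, hsum, Finset.sum_mul]
          refine Finset.sum_congr rfl fun τ _ => ?_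
          rw [mul_assoc, key]
      _ = ∑ σ : G, ∑ μ : G,
            α μ (f (μ⁻¹ * ρ) * e μ⁻¹) * (α σ (g (σ⁻¹ * μ) * e σ⁻¹) * h σ) := by
          refine Finset.sum_congr rfl fun σ _ => ?_
          refine Fintype.sum_equiv (Equiv.mulLeft σ) _ _ fun τ => ?_
          simp only [Equiv.coe_mulLeft]
          rw [mul_assoc]
          simp only [mul_inv_rev, mul_assoc, inv_mul_cancel_left]
      _ = ∑ μ : G, ∑ σ : G,
            α μ (f (μ⁻¹ * ρ) * e μ⁻¹) * (α σ (g (σ⁻¹ * μ) * e σ⁻¹) * h σ) :=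
          Finset.sum_comm
      _ = ∑ σ : G, α σ (f (σ⁻¹ * ρ) * e σ⁻¹) *
            ∑ τ : G, α τ (g (τ⁻¹ * σ) * e τ⁻¹) * h τ := by
          refine Finset.sum_congr rfl fun μ _ => ?_
          rw [Finset.mul_sum]
  · -- unit laws
    intro f hf
    constructor
    · funext ρ
      simp only [dualMul, dualOne]
      rw [Finset.sum_eq_single ρ]
      · rw [if_pos (inv_mul_cancel ρ), one_mul]
        have he : α ρ (e ρ⁻¹) = α ρ 1 := by rw [hext ρ 1, one_mul]
        rw [he]
        have : f ρ = e ρ * f ρ := by rw [hcen, hf]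
        rw [this, ← mul_assoc, hαone]
      · intro σ _ hσ
        rw [if_neg (by simp [inv_mul_eq_one, hσ]), zero_mul, hzero, zero_mul]
      · intro hρ
        exact absurd (Finset.mem_univ ρ) hρ
    · funext ρ
      simp only [dualMul, dualOne]
      rw [Finset.sum_eq_single 1]
      · simp [hα1, hone, hf]
      · intro σ _ hσ
        rw [if_neg hσ, mul_zero]
      · intro hρ
        exact absurd (Finset.mem_univ 1) hρ
end

section
/- Let (e_σ, α_σ)_{σ∈G} be an idempotent partial action of a finite group G on a ring A, R = ⊕_σ u_σ Ae_σ the left dual ring (multiplication (u_τ b)(u_σ a) = u_{στ} α_σ(b e_{σ⁻¹}) a), and j : A → R, j(a) = u_1 a, the ring embedding. Then the element e = Σ_{σ∈G} u_{σ⁻¹} ⊗_A u_σ ∈ R ⊗_A R satisfies j(a) e = e j(a) for all a ∈ A, i.e. Σ_σ (u_{σ⁻¹} α_{σ⁻¹}(a e_σ)) ⊗_A u_σ = Σ_σ u_{σ⁻¹} ⊗_A (u_σ α_σ(α_{σ⁻¹}(a e_σ))), and together with the A-bimodule map ν̄ : R → A, ν̄(Σ_σ u_σ a_σ) = a_1,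 satisfying ν̄(e¹)e² = e¹ν̄(e²) = 1, this makes the ring extension j : A → R Frobenius. -/
/-- The element u_σ b of R. -/
def uElt {G A : Type*} [Group G] [DecidableEq G] [Ring A] (σ : G) (b : A) :
    G → A :=
  fun ρ => if ρ = σ then b else 0

/-- Normal form of the elementary tensor (u_σ b) ⊗_A (u_τ c) in R ⊗_A R: its
(σ,τ)-coefficient is α_τ(b e_{τ⁻¹}) c (obtained by moving b across the tensor
sign using b (u_τ c) = u_τ α_τ(b e_{τ⁻¹}) c). -/
def elemTen {G A : Type*} [Group G] [DecidableEq G] [Ring A] (e : G → A)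
    (α : G → A → A) (σ : G) (b : A) (τ : G) (c : A) : G × G → A :=
  fun p => if p = (σ, τ) then α τ (b * e τ⁻¹) * c else 0

/-- ν̄(Σ_σ u_σ a_σ) = a_1. -/
def nubar {G A : Type*} [Group G] [Ring A] (f : G → A) : A := f 1

/- STATEMENT 16: the Casimir element Φ = Σ_σ u_{σ⁻¹} ⊗_A u_σ commutes with
j(a) = u_1 a for every a ∈ A, and together with ν̄ satisfies
ν̄(Φ¹)Φ² = Φ¹ν̄(Φ²) = 1, so that j : A → R is a Frobenius extension. -/
theorem stmt_16 (G A : Type*) [Group G] [Fintype G] [DecidableEq G] [Ring A]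
    (e : G → A) (α : G → A → A)
    (hcen : ∀ σ a, e σ * a = a * e σ)
    (hidem : ∀ σ, e σ * e σ = e σ)
    (hext : ∀ σ a, α σ a = α σ (a * e σ⁻¹))
    (hmem : ∀ σ a, α σ a * e σ = α σ a)
    (hadd : ∀ σ a b, α σ (a + b) = α σ a + α σ b)
    (hmul : ∀ σ a b, α σ (a * b) = α σ a * α σ b)
    (hone : e 1 = 1)
    (hα1 : ∀ a, α 1 a = a)
    (hcompat : ∀ σ τ a,
      α σ (α τ (a * e τ⁻¹) * e σ⁻¹) = α (σ * τ) (a * e (τ⁻¹ * σ⁻¹)) * e σ) :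
    (∀ a : A,
      ∑ σ : G, elemTen e α σ⁻¹ (α σ⁻¹ (a * e σ)) σ (e σ) =
      ∑ σ : G, elemTen e α σ⁻¹ (e σ⁻¹) σ (α σ (α σ⁻¹ (a * e σ)))) ∧
    (∑ σ : G, dualMul e α (uElt (1 : G) (nubar (uElt σ⁻¹ (e σ⁻¹))))
        (uElt σ (e σ)) = uElt (1 : G) (1 : A)) ∧
    ((∑ σ : G, fun ρ => uElt σ⁻¹ (e σ⁻¹) ρ * nubar (uElt σ (e σ))) =
      uElt (1 : G) (1 : A)) := by
  have hα0 : ∀ σ, α σ (0 : A) = 0 := by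
    intro σ
    have h := hadd σ 0 0
    rw [add_zero] at h
    exact (left_eq_add.mp h)
  have key : ∀ (σ : G) (a : A), α σ (α σ⁻¹ (a * e σ) * e σ⁻¹) = a * e σ := by
    intro σ a
    have h := hcompat σ σ⁻¹ a
    simpa [hα1, hone] using h
  refine ⟨?_, ?_, ?_⟩
  · intro a
    refine Finset.sum_congr rfl fun σ _ => ?_
    funext p
    unfold elemTen
    by_cases hp : p = (σ⁻¹, σ)
    · simp only [hp, if_pos rfl]
      rw [hidem σ⁻¹, ← hmul σ, hcen σ⁻¹, key, mul_assoc, hidem]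
    · simp [hp]
  · funext ρ
    rw [Finset.sum_apply]
    rw [Finset.sum_eq_single 1]
    · simp [dualMul, uElt, nubar, hone, hα1, mul_ite, ite_mul, hα0]
    · intro σ _ hσ
      have : (1 : G) ≠ σ⁻¹ := by
        intro h; exact hσ (by rw [← inv_inv σ, ← h, inv_one])
      simp [dualMul, uElt, nubar, this, hα0]
    · simp
  · funext ρ
    rw [Finset.sum_apply]
    rw [Finset.sum_eq_single 1]
    · simp [uElt, nubar, hone]
    · intro σ _ hσ
      have : (1 : G) ≠ σ := fun h => hσ h.symm
      simp [uElt, nubar, this]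
    · simp
end

section
/- Let (e_σ, α_σ)_{σ∈G} be an idempotent partial action of a finite group G on a ring A, with associated coring C = ⊕_σ A v_σ and grouplike x = Σ_σ v_σ. A left A-linear map q = Σ_σ u_σ a_σ (a_σ ∈ Ae_σ) in *C = ⊕_σ u_σ Ae_σ satisfies c₍₁₎ q(c₍₂₎) = q(c) x for all c ∈ C if and only if a_σ = α_σ(a_1 e_{σ⁻¹}) for all σ ∈ G; equivalently, the set Q of such q equals { Σ_σ u_σ α_σ(a e_{σ⁻¹}) : a ∈ A }. -/
/- STATEMENT 17: an element q = Σ_σ u_σ a_σ of *C (a_σ ∈ Ae_σ), acting on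
c = Σ_σ c_σ v_σ ∈ C by q(c) = Σ_σ c_σ a_σ, satisfies c₍₁₎ q(c₍₂₎) = q(c) x for
all c ∈ C (the left side has ρ-component Σ_σ c_σ α_ρ(a_{ρ⁻¹σ} e_{ρ⁻¹}), the
right side Σ_σ (c_σ a_σ) e_ρ) if and only if a_σ = α_σ(a_1 e_{σ⁻¹}) for all σ;
i.e. Q = { Σ_σ u_σ α_σ(a e_{σ⁻¹}) : a ∈ A }. -/
theorem stmt_17 (G A : Type*) [Group G] [Fintype G] [Ring A]
    (e : G → A) (α : G → A → A)
    (hcen : ∀ σ a, e σ * a = a * e σ)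
    (hidem : ∀ σ, e σ * e σ = e σ)
    (hext : ∀ σ a, α σ a = α σ (a * e σ⁻¹))
    (hmem : ∀ σ a, α σ a * e σ = α σ a)
    (hadd : ∀ σ a b, α σ (a + b) = α σ a + α σ b)
    (hmul : ∀ σ a b, α σ (a * b) = α σ a * α σ b)
    (hone : e 1 = 1)
    (hα1 : ∀ a, α 1 a = a)
    (hcompat : ∀ σ τ a,
      α σ (α τ (a * e τ⁻¹) * e σ⁻¹) = α (σ * τ) (a * e (τ⁻¹ * σ⁻¹)) * e σ) :
    ∀ a : G → A, (∀ σ, a σ * e σ = a σ) →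
      ((∀ c : G → A, (∀ σ, c σ * e σ = c σ) →
          ∀ ρ : G, ∑ σ : G, c σ * α ρ (a (ρ⁻¹ * σ) * e ρ⁻¹) =
            (∑ σ : G, c σ * a σ) * e ρ)
        ↔ ∀ σ : G, a σ = α σ (a 1 * e σ⁻¹)) := by
  classical
  intro a ha
  constructor
  · intro h σ
    have hc : ∀ τ : G, (if τ = σ then e σ else 0) * e τ = (if τ = σ then e σ else 0) := by
      intro τ; by_cases hτ : τ = σ <;> simp [hτ, hidem]
    have key := h (fun τ => if τ = σ then e σ else 0) hc σ
    simp only [ite_mul, zero_mul] at key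
    rw [Finset.sum_ite_eq' Finset.univ σ, Finset.sum_ite_eq' Finset.univ σ] at key
    simp only [Finset.mem_univ, if_true, inv_mul_cancel] at key
    -- key : e σ * α σ (a 1 * e σ⁻¹) = e σ * a σ * e σ
    calc a σ = e σ * a σ * e σ := by
                rw [hcen σ (a σ), mul_assoc, hidem, ha]
      _ = e σ * α σ (a 1 * e σ⁻¹) := key.symm
      _ = α σ (a 1 * e σ⁻¹) := by rw [hcen, hmem]
  · intro h c hc ρ
    rw [Finset.sum_mul]
    refine Finset.sum_congr rfl fun σ _ => ?_
    have key : α ρ (a (ρ⁻¹ * σ) * e ρ⁻¹) = a σ * e ρ := by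
      have hcp := hcompat ρ (ρ⁻¹ * σ) (a 1)
      simp only [mul_inv_rev, inv_inv, mul_inv_cancel_left, mul_inv_cancel_right] at hcp
      rw [h (ρ⁻¹ * σ), mul_inv_rev, inv_inv, hcp, ← h σ]
    rw [key, ← mul_assoc]
end
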